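/- (Bound on the gain-times-product mismatch Δ₁.) Let r ∈ ℕ, 0 = s₀ ≤ s₁ ≤ … ≤ s_{r+1} = S, let Ā, A₁, …, A_{r+1} be q×q real matrices with ‖Ā‖ ≤ M̄, ‖Aₙ‖ ≤ M̄ and ‖Ā − Aₙ‖ ≤ ε_A for all n, and let K̄, K ∈ ℝ^{1×q} with ‖K‖ ≤ M_K and ‖K̄ − K‖ ≤ ε_K. Then ‖ K̄ · ∏_{n=1}^{r+1} exp(Ā(sₙ−sₙ₋₁)) − K · ∏_{n=1}^{r+1} exp(Aₙ(sₙ−sₙ₋₁)) ‖ ≤ e^{(M̄ + ε_A) S} ( M_K ε_A S + ε_K ). -/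

import Mathlib

open NormedSpace Nat

/-- Descending product `∏_{j=a}^{b} C j := C b * C (b-1) * ⋯ * C a`
(the identity if `b < a`). -/
noncomputable def dprod {α : Type*} [Monoid α] (C : ℕ → α) (a b : ℕ) : α :=
  ((List.range' a (b + 1 - a)).reverse.map C).prod

/-- Norm of a power, assuming `‖1‖ ≤ 1`. -/
lemma my_norm_pow_le {𝔸 : Type*} [NormedRing 𝔸] (h1 : ‖(1:𝔸)‖ ≤ 1) (x : 𝔸) :
    ∀ n, ‖x ^ n‖ ≤ ‖x‖ ^ n := by
  intro n
  induction n with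
  | zero => simpa using h1
  | succ n ih =>
    rw [pow_succ, pow_succ]
    exact (norm_mul_le _ _).trans
      (mul_le_mul ih le_rfl (norm_nonneg _) (pow_nonneg (norm_nonneg _) _))

/-- Norm bound on the exponential. -/
lemma my_norm_exp_le {𝔸 : Type*} [NormedRing 𝔸] [NormedAlgebra ℝ 𝔸] [CompleteSpace 𝔸]
    (h1 : ‖(1:𝔸)‖ ≤ 1) (x : 𝔸) : ‖exp x‖ ≤ Real.exp ‖x‖ := by
  have hg : HasSum (fun n : ℕ => (n !⁻¹ : ℝ) * ‖x‖ ^ n) (Real.exp ‖x‖) := by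
    have := exp_series_hasSum_exp' (𝕂 := ℝ) (‖x‖)
    rw [← Real.exp_eq_exp_ℝ] at this
    simpa [smul_eq_mul] using this
  have hb : ∀ n : ℕ, ‖(n !⁻¹ : ℝ) • x ^ n‖ ≤ (n !⁻¹ : ℝ) * ‖x‖ ^ n := by
    intro n
    rw [norm_smul, Real.norm_eq_abs, abs_of_nonneg (by positivity)]
    exact mul_le_mul_of_nonneg_left (my_norm_pow_le h1 x n) (by positivity)
  have := tsum_of_norm_bounded hg hb
  simpa [exp_eq_tsum ℝ] using this

/-- Lipschitz-type bound for the exponential on a ball. -/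
lemma my_exp_sub_exp_le {𝔸 : Type*} [NormedRing 𝔸] [NormedAlgebra ℝ 𝔸] [CompleteSpace 𝔸]
    (h1 : ‖(1:𝔸)‖ ≤ 1) (x y : 𝔸) (M : ℝ) (hx : ‖x‖ ≤ M) (hy : ‖y‖ ≤ M) :
    ‖exp x - exp y‖ ≤ Real.exp M * ‖x - y‖ := by
  have hM0 : 0 ≤ M := (norm_nonneg x).trans hx
  set D := ‖x - y‖ with hD
  have hD0 : 0 ≤ D := norm_nonneg _
  -- power difference bound
  have hpow : ∀ n : ℕ, ‖x ^ (n+1) - y ^ (n+1)‖ ≤ (n+1) * M ^ n * D := by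
    intro n
    induction n with
    | zero => simp [hD]
    | succ n ih =>
      have hsplit : x ^ (n+2) - y ^ (n+2)
          = x ^ (n+1) * (x - y) + (x ^ (n+1) - y ^ (n+1)) * y := by
        rw [pow_succ, pow_succ]; noncomm_ring
      have h1' : ‖x ^ (n+1) * (x - y)‖ ≤ M ^ (n+1) * D := by
        refine (norm_mul_le _ _).trans ?_
        refine mul_le_mul ?_ le_rfl hD0 (by positivity)
        exact (my_norm_pow_le h1 x (n+1)).trans (pow_le_pow_left₀ (norm_nonneg _) hx _)
      have h2' : ‖(x ^ (n+1) - y ^ (n+1)) * y‖ ≤ ((n+1) * M ^ n * D) * M := by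
        refine (norm_mul_le _ _).trans ?_
        exact mul_le_mul ih hy (norm_nonneg _) (by positivity)
      have hmain : ‖x ^ (n+2) - y ^ (n+2)‖
          ≤ M ^ (n+1) * D + ((n:ℝ)+1) * M ^ n * D * M := by
        rw [hsplit]
        exact (norm_add_le _ _).trans (add_le_add h1' h2')
      have key : ((n:ℝ)+1) * M ^ n * D * M = ((n:ℝ)+1) * M ^ (n+1) * D := by
        rw [pow_succ]; ring
      rw [key] at hmain
      push_cast
      nlinarith [hmain, mul_nonneg (pow_nonneg hM0 (n+1)) hD0]
  -- the series bound
  set g : ℕ → ℝ := fun n => if n = 0 then 0 else M ^ (n-1) / (n-1)! * D with hgdef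
  have hg : HasSum g (Real.exp M * D) := by
    have hbase : HasSum (fun k : ℕ => M ^ k / k ! * D) (Real.exp M * D) := by
      have := expSeries_div_hasSum_exp (𝔸 := ℝ) M
      rw [← Real.exp_eq_exp_ℝ] at this
      exact this.mul_right D
    have : HasSum (fun n : ℕ => g (n + 1))
        (Real.exp M * D - ∑ i ∈ Finset.range 1, g i) := by
      simpa [hgdef, Nat.add_sub_cancel] using hbase
    exact (hasSum_nat_add_iff' 1).mp this
  have hb : ∀ n : ℕ, ‖(n !⁻¹ : ℝ) • x ^ n - (n !⁻¹ : ℝ) • y ^ n‖ ≤ g n := by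
    intro n
    rw [← smul_sub, norm_smul, Real.norm_eq_abs, abs_of_nonneg (by positivity)]
    cases n with
    | zero => simp [hgdef]
    | succ k =>
      simp only [hgdef, Nat.add_sub_cancel, if_neg (Nat.succ_ne_zero k)]
      have hfact : ((k+1)! : ℝ) = (k+1) * (k !) := by
        rw [Nat.factorial_succ]; push_cast; ring
      have hkf : (0:ℝ) < k ! := by positivity
      calc ((k+1)! : ℝ)⁻¹ * ‖x ^ (k+1) - y ^ (k+1)‖
          ≤ ((k+1)! : ℝ)⁻¹ * ((k+1) * M ^ k * D) := by
            exact mul_le_mul_of_nonneg_left (hpow k) (by positivity)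
        _ = M ^ k / k ! * D := by
            rw [hfact]; field_simp
  have hsum : HasSum (fun n : ℕ => (n !⁻¹ : ℝ) • x ^ n - (n !⁻¹ : ℝ) • y ^ n)
      (exp x - exp y) :=
    (exp_series_hasSum_exp' x).sub (exp_series_hasSum_exp' y)
  have := tsum_of_norm_bounded hg hb
  rwa [hsum.tsum_eq] at this

lemma dprod_zero {α : Type*} [Monoid α] (C : ℕ → α) : dprod C 1 0 = 1 := by
  simp [dprod]

lemma dprod_succ {α : Type*} [Monoid α] (C : ℕ → α) (m : ℕ) :
    dprod C 1 (m + 1) = C (m + 1) * dprod C 1 m := by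
  have h1 : m + 1 + 1 - 1 = m + 1 := by omega
  have h2 : m + 1 - 1 = m := by omega
  rw [dprod, dprod, h1, h2, List.range'_concat]
  simp [Nat.add_comm]

set_option synthInstance.maxHeartbeats 1000000 in
set_option maxHeartbeats 1000000 in
/-- **Bound on the gain-times-product mismatch Δ₁.**  Let `r ∈ ℕ`,
`0 = s₀ ≤ s₁ ≤ … ≤ s_{r+1} = S`, let `Ā, A₁, …, A_{r+1}` be `q × q` real matrices with
`‖Ā‖ ≤ M̄`, `‖Aₙ‖ ≤ M̄` and `‖Ā − Aₙ‖ ≤ ε_A` for all `n`, and let `K̄, K ∈ ℝ^{1×q}` with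
`‖K‖ ≤ M_K` and `‖K̄ − K‖ ≤ ε_K`.  Then
`‖K̄ ∏_{n=1}^{r+1} exp(Ā(sₙ−sₙ₋₁)) − K ∏_{n=1}^{r+1} exp(Aₙ(sₙ−sₙ₋₁))‖
  ≤ e^{(M̄ + ε_A) S}(M_K ε_A S + ε_K)`, products in descending index order. -/
theorem stmt8 (q r : ℕ) (S Mbar εA εK MK : ℝ) (s : ℕ → ℝ)
    (hs0 : s 0 = 0) (hmono : ∀ k, k ≤ r → s k ≤ s (k + 1)) (hsS : s (r + 1) = S)
    (Abar : EuclideanSpace ℝ (Fin q) →L[ℝ] EuclideanSpace ℝ (Fin q))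
    (A : ℕ → (EuclideanSpace ℝ (Fin q) →L[ℝ] EuclideanSpace ℝ (Fin q)))
    (Kbar K : EuclideanSpace ℝ (Fin q) →L[ℝ] ℝ)
    (hAbar : ‖Abar‖ ≤ Mbar)
    (hA : ∀ n, 1 ≤ n → n ≤ r + 1 → ‖A n‖ ≤ Mbar)
    (hAd : ∀ n, 1 ≤ n → n ≤ r + 1 → ‖Abar - A n‖ ≤ εA)
    (hK : ‖K‖ ≤ MK) (hKd : ‖Kbar - K‖ ≤ εK) :
    ‖Kbar.comp (dprod (fun n => NormedSpace.exp ((s n - s (n - 1)) • Abar)) 1 (r + 1)) -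
        K.comp (dprod (fun n => NormedSpace.exp ((s n - s (n - 1)) • A n)) 1 (r + 1))‖ ≤
      Real.exp ((Mbar + εA) * S) * (MK * εA * S + εK) := by
  have h1 : ‖(1 : EuclideanSpace ℝ (Fin q) →L[ℝ] EuclideanSpace ℝ (Fin q))‖ ≤ 1 := by
    rw [ContinuousLinearMap.one_def]; exact ContinuousLinearMap.norm_id_le
  set Cb : ℕ → (EuclideanSpace ℝ (Fin q) →L[ℝ] EuclideanSpace ℝ (Fin q)) :=
    fun n => exp ((s n - s (n - 1)) • Abar) with hCb
  set Ca : ℕ → (EuclideanSpace ℝ (Fin q) →L[ℝ] EuclideanSpace ℝ (Fin q)) :=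
    fun n => exp ((s n - s (n - 1)) • A n) with hCa
  have hMbar0 : 0 ≤ Mbar := (norm_nonneg _).trans hAbar
  have hεA0 : 0 ≤ εA := (norm_nonneg _).trans (hAd 1 le_rfl (by omega))
  have hεK0 : 0 ≤ εK := (norm_nonneg _).trans hKd
  have hMK0 : 0 ≤ MK := (norm_nonneg _).trans hK
  have hs_nonneg : ∀ k, k ≤ r + 1 → 0 ≤ s k := by
    intro k
    induction k with
    | zero => intro _; rw [hs0]
    | succ k ih =>
      intro hk
      exact (ih (by omega)).trans (hmono k (by omega))
  have hS0 : 0 ≤ S := hsS ▸ hs_nonneg (r+1) le_rfl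
  -- main induction
  have claim : ∀ m, m ≤ r + 1 →
      ‖dprod Cb 1 m‖ ≤ Real.exp (Mbar * s m) ∧
      ‖dprod Ca 1 m‖ ≤ Real.exp (Mbar * s m) ∧
      ‖dprod Cb 1 m - dprod Ca 1 m‖ ≤ εA * s m * Real.exp (Mbar * s m) := by
    intro m
    induction m with
    | zero =>
      intro _
      rw [dprod_zero, dprod_zero, hs0]
      refine ⟨?_, ?_, ?_⟩
      · simpa only [mul_zero, Real.exp_zero] using h1
      · simpa only [mul_zero, Real.exp_zero] using h1
      · simp only [sub_self, norm_zero, mul_zero, zero_mul]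
        exact le_rfl
    | succ m ih =>
      intro hm
      obtain ⟨ihb, iha, ihd⟩ := ih (by omega)
      have hΔ0 : 0 ≤ s (m+1) - s m := by linarith [hmono m (by omega)]
      have hsm0 : 0 ≤ s m := hs_nonneg m (by omega)
      have hidx : (m + 1 : ℕ) - 1 = m := by omega
      have hnormb : ‖(s (m+1) - s ((m+1:ℕ) - 1)) • Abar‖ ≤ Mbar * (s (m+1) - s m) := by
        rw [hidx]
        have hns : ‖(s (m+1) - s m) • Abar‖ ≤ ‖(s (m+1) - s m : ℝ)‖ * ‖Abar‖ :=
          ContinuousLinearMap.opNorm_smul_le _ _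
        refine hns.trans ?_
        rw [Real.norm_eq_abs, abs_of_nonneg hΔ0, mul_comm Mbar]
        exact mul_le_mul_of_nonneg_left hAbar hΔ0
      have hnorma : ‖(s (m+1) - s ((m+1:ℕ) - 1)) • A (m+1)‖ ≤ Mbar * (s (m+1) - s m) := by
        rw [hidx]
        have hns : ‖(s (m+1) - s m) • A (m+1)‖ ≤ ‖(s (m+1) - s m : ℝ)‖ * ‖A (m+1)‖ :=
          ContinuousLinearMap.opNorm_smul_le _ _
        refine hns.trans ?_
        rw [Real.norm_eq_abs, abs_of_nonneg hΔ0, mul_comm Mbar]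
        exact mul_le_mul_of_nonneg_left (hA (m+1) (by omega) (by omega)) hΔ0
      have hCbn : ‖Cb (m+1)‖ ≤ Real.exp (Mbar * (s (m+1) - s m)) :=
        (my_norm_exp_le h1 _).trans (Real.exp_le_exp.mpr hnormb)
      have hCan : ‖Ca (m+1)‖ ≤ Real.exp (Mbar * (s (m+1) - s m)) :=
        (my_norm_exp_le h1 _).trans (Real.exp_le_exp.mpr hnorma)
      have hexpadd : Real.exp (Mbar * (s (m+1) - s m)) * Real.exp (Mbar * s m)
          = Real.exp (Mbar * s (m+1)) := by
        rw [← Real.exp_add]; ring_nf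
      have hCdn : ‖Cb (m+1) - Ca (m+1)‖
          ≤ Real.exp (Mbar * (s (m+1) - s m)) * (εA * (s (m+1) - s m)) := by
        refine (my_exp_sub_exp_le h1 _ _ (Mbar * (s (m+1) - s m)) hnormb hnorma).trans ?_
        refine mul_le_mul_of_nonneg_left ?_ (Real.exp_nonneg _)
        have heq : (s (m+1) - s ((m+1:ℕ) - 1)) • Abar - (s (m+1) - s ((m+1:ℕ) - 1)) • A (m+1)
            = (s (m+1) - s m) • (Abar - A (m+1)) := by
          rw [hidx, smul_sub]
        rw [heq]
        have hns : ‖(s (m+1) - s m) • (Abar - A (m+1))‖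
            ≤ ‖(s (m+1) - s m : ℝ)‖ * ‖Abar - A (m+1)‖ := ContinuousLinearMap.opNorm_smul_le _ _
        refine hns.trans ?_
        rw [Real.norm_eq_abs, abs_of_nonneg hΔ0, mul_comm εA]
        exact mul_le_mul_of_nonneg_left (hAd (m+1) (by omega) (by omega)) hΔ0
      have hEb0 : (0:ℝ) < Real.exp (Mbar * (s (m+1) - s m)) := Real.exp_pos _
      have hEm0 : (0:ℝ) < Real.exp (Mbar * s m) := Real.exp_pos _
      refine ⟨?_, ?_, ?_⟩
      · rw [dprod_succ]
        refine (norm_mul_le _ _).trans ?_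
        calc ‖Cb (m+1)‖ * ‖dprod Cb 1 m‖
            ≤ Real.exp (Mbar * (s (m+1) - s m)) * Real.exp (Mbar * s m) :=
              mul_le_mul hCbn ihb (norm_nonneg _) hEb0.le
          _ = Real.exp (Mbar * s (m+1)) := hexpadd
      · rw [dprod_succ]
        refine (norm_mul_le _ _).trans ?_
        calc ‖Ca (m+1)‖ * ‖dprod Ca 1 m‖
            ≤ Real.exp (Mbar * (s (m+1) - s m)) * Real.exp (Mbar * s m) :=
              mul_le_mul hCan iha (norm_nonneg _) hEb0.le
          _ = Real.exp (Mbar * s (m+1)) := hexpadd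
      · rw [dprod_succ, dprod_succ]
        have hsplit : Cb (m+1) * dprod Cb 1 m - Ca (m+1) * dprod Ca 1 m
            = Cb (m+1) * (dprod Cb 1 m - dprod Ca 1 m)
              + (Cb (m+1) - Ca (m+1)) * dprod Ca 1 m := by
          rw [mul_sub, sub_mul]; abel
        rw [hsplit]
        refine (norm_add_le _ _).trans ?_
        have t1 : ‖Cb (m+1) * (dprod Cb 1 m - dprod Ca 1 m)‖
            ≤ Real.exp (Mbar * (s (m+1) - s m)) * (εA * s m * Real.exp (Mbar * s m)) :=
          (norm_mul_le _ _).trans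
            (mul_le_mul hCbn ihd (norm_nonneg _) hEb0.le)
        have t2 : ‖(Cb (m+1) - Ca (m+1)) * dprod Ca 1 m‖
            ≤ (Real.exp (Mbar * (s (m+1) - s m)) * (εA * (s (m+1) - s m)))
              * Real.exp (Mbar * s m) :=
          (norm_mul_le _ _).trans
            (mul_le_mul hCdn iha (norm_nonneg _) (by positivity))
        refine (add_le_add t1 t2).trans ?_
        rw [← hexpadd]; ring_nf; nlinarith [hEb0, hEm0]
  obtain ⟨hP, -, hPQ⟩ := claim (r+1) le_rfl
  rw [hsS] at hP hPQ
  set P := dprod Cb 1 (r+1)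
  set Q := dprod Ca 1 (r+1)
  have hrw : Kbar.comp P - K.comp Q = (Kbar - K).comp P + K.comp (P - Q) := by
    rw [ContinuousLinearMap.sub_comp, ContinuousLinearMap.comp_sub]; abel
  rw [hrw]
  have step1 : ‖(Kbar - K).comp P + K.comp (P - Q)‖
      ≤ εK * Real.exp (Mbar * S) + MK * (εA * S * Real.exp (Mbar * S)) := by
    refine (norm_add_le _ _).trans (add_le_add ?_ ?_)
    · exact (ContinuousLinearMap.opNorm_comp_le _ _).trans
        (mul_le_mul hKd hP (norm_nonneg _) hεK0)
    · exact (ContinuousLinearMap.opNorm_comp_le _ _).trans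
        (mul_le_mul hK hPQ (norm_nonneg _) hMK0)
  refine step1.trans ?_
  have heq : εK * Real.exp (Mbar * S) + MK * (εA * S * Real.exp (Mbar * S))
      = Real.exp (Mbar * S) * (MK * εA * S + εK) := by ring
  rw [heq]
  refine mul_le_mul_of_nonneg_right (Real.exp_le_exp.mpr ?_) (by positivity)
  nlinarith
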